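/- In the group G = ⟨X, Y, Z | X^n = Z^α, Y^2 = 1, YX = X^{n-1}YZ^γ, YZ = ZY, XZ = ZX, Z^m = 1⟩, the commutator subgroup [G, G] is the cyclic subgroup generated by X^2 Z^{-α-γ}. -/

import Mathlib

/-- Relations for the central extension of the dihedral group `D_{2n}` by `ℤ/mℤ`
with parameters `(α, β, γ)`: generators `X = 0`, `Y = 1`, `Z = 2`. -/
def grels (n m : ℕ) (α β γ : ℤ) : Set (FreeGroup (Fin 3)) :=
  { FreeGroup.of (0 : Fin 3) ^ n * (FreeGroup.of (2 : Fin 3) ^ α)⁻¹,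
    FreeGroup.of (1 : Fin 3) ^ 2 * (FreeGroup.of (2 : Fin 3) ^ β)⁻¹,
    FreeGroup.of (1 : Fin 3) * FreeGroup.of (0 : Fin 3) *
      (FreeGroup.of (0 : Fin 3) ^ (n - 1) * FreeGroup.of (1 : Fin 3) *
        FreeGroup.of (2 : Fin 3) ^ γ)⁻¹,
    FreeGroup.of (1 : Fin 3) * FreeGroup.of (2 : Fin 3) *
      (FreeGroup.of (2 : Fin 3) * FreeGroup.of (1 : Fin 3))⁻¹,
    FreeGroup.of (0 : Fin 3) * FreeGroup.of (2 : Fin 3) *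
      (FreeGroup.of (2 : Fin 3) * FreeGroup.of (0 : Fin 3))⁻¹,
    FreeGroup.of (2 : Fin 3) ^ m }

/-- The central extension `G(α, β, γ)` of `D_{2n}` by `ℤ/mℤ`. -/
abbrev GG (n m : ℕ) (α β γ : ℤ) : Type := PresentedGroup (grels n m α β γ)

def gX (n m : ℕ) (α β γ : ℤ) : GG n m α β γ := PresentedGroup.of 0
def gY (n m : ℕ) (α β γ : ℤ) : GG n m α β γ := PresentedGroup.of 1
def gZ (n m : ℕ) (α β γ : ℤ) : GG n m α β γ := PresentedGroup.of 2

/-! Write `w = x² z^(-c)`. Since `z` is central and `y x y⁻¹ = x⁻¹ z^c`, we get `⁅x, y⁆ = w`,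
while `w` commutes with `x` and `z` and is inverted by `y`; so `⟨w⟩` is normal. Modulo `⟨w⟩` the
generators commute pairwise, the quotient is abelian, and `[G, G] ≤ ⟨w⟩`. For the presented group,
`c = α + γ` because `Y X Y⁻¹ = X^(n-1) Z^γ = X⁻¹ Z^(α+γ)`. -/

open Subgroup
open scoped commutatorElement

variable {G : Type*} [Group G]

theorem Subgroup.mem_normalizer_zpowers_of_conj_eq {g w : G}
    (h : g * w * g⁻¹ = w ∨ g * w * g⁻¹ = w⁻¹) : g ∈ normalizer (zpowers w) := by
  rw [mem_normalizer_iff_map_conj_eq, MonoidHom.map_zpowers]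
  rcases h with h | h
  · simp [MulAut.conj_apply, h]
  · simp [MulAut.conj_apply, h, zpowers_inv]

theorem Subgroup.normal_of_closure_eq_top {H : Subgroup G} {s : Set G}
    (hs : closure s = ⊤) (h : ∀ g ∈ s, g ∈ normalizer H) : H.Normal := by
  rw [← normalizer_eq_top_iff, eq_top_iff, ← hs, closure_le]
  exact h

theorem Subgroup.mem_center_of_closure_eq_top {s : Set G} (hs : closure s = ⊤) {z : G}
    (h : ∀ g ∈ s, Commute g z) : z ∈ center G := by
  rw [← centralizer_univ, ← coe_top, ← hs, centralizer_closure]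
  exact fun g hg => h g hg

theorem Subgroup.commutator_le_of_closure_eq_top {N : Subgroup G} [N.Normal] {s : Set G}
    (hs : closure s = ⊤) (h : ∀ x ∈ s, ∀ y ∈ s, ⁅x, y⁆ ∈ N) : _root_.commutator G ≤ N := by
  rw [← Normal.quotient_commutative_iff_commutator_le]
  set k := QuotientGroup.mk' N '' s
  have hk : closure k = ⊤ := by
    rw [← MonoidHom.map_closure, hs, ← MonoidHom.range_eq_map, MonoidHom.range_eq_top]
    exact QuotientGroup.mk'_surjective N
  have hcomm : ∀ a ∈ k, ∀ b ∈ k, a * b = b * a := by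
    rintro _ ⟨x, hx, rfl⟩ _ ⟨y, hy, rfl⟩
    rw [← commutatorElement_eq_one_iff_mul_comm, ← map_commutatorElement,
      QuotientGroup.mk'_apply, QuotientGroup.eq_one_iff]
    exact h x hx y hy
  have := isMulCommutative_closure hcomm
  rw [hk] at this
  exact ⟨⟨fun a b => congrArg Subtype.val (this.is_comm.comm ⟨a, mem_top a⟩ ⟨b, mem_top b⟩)⟩⟩

section CentralDihedral

variable {x y z : G} {c : ℤ}

theorem commutatorElement_eq_sq_mul_zpow (hz : z ∈ center G)
    (hyx : y * x * y⁻¹ = x⁻¹ * z ^ c) : ⁅x, y⁆ = x ^ 2 * z ^ (-c) :=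
  calc ⁅x, y⁆ = x * (y * x * y⁻¹)⁻¹ := by group
    _ = x * (z ^ (-c) * x) := by rw [hyx]; group
    _ = x ^ 2 * z ^ (-c) := by
      rw [← mem_center_iff.mp (zpow_mem hz (-c)) x, sq, mul_assoc]

theorem conj_sq_mul_zpow_eq_inv (hz : z ∈ center G) (hyx : y * x * y⁻¹ = x⁻¹ * z ^ c) :
    y * (x ^ 2 * z ^ (-c)) * y⁻¹ = (x ^ 2 * z ^ (-c))⁻¹ :=
  calc y * (x ^ 2 * z ^ (-c)) * y⁻¹
      = (y * x * y⁻¹) ^ 2 * (y * z ^ (-c) * y⁻¹) := by rw [conj_pow]; group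
    _ = (x⁻¹ * z ^ c) ^ 2 * z ^ (-c) := by
      rw [hyx, mem_center_iff.mp (zpow_mem hz (-c)) y]; group
    _ = x⁻¹ * x⁻¹ * z ^ c := by
      rw [sq, mul_assoc x⁻¹, ← mul_assoc (z ^ c) x⁻¹, ← mem_center_iff.mp (zpow_mem hz c) x⁻¹]
      group
    _ = (x ^ 2 * z ^ (-c))⁻¹ := by
      rw [mem_center_iff.mp (zpow_mem hz c)]; group

theorem commutator_eq_zpowers_of_conj_eq_inv_mul (hs : closure {x, y, z} = ⊤)
    (hxz : Commute x z) (hyz : Commute y z) (hyx : y * x * y⁻¹ = x⁻¹ * z ^ c) :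
    _root_.commutator G = zpowers (x ^ 2 * z ^ (-c)) := by
  have hz : z ∈ center G := mem_center_of_closure_eq_top hs (by
    rintro g (rfl | rfl | rfl)
    exacts [hxz, hyz, Commute.refl g])
  set w := x ^ 2 * z ^ (-c)
  have hw : ⁅x, y⁆ = w := commutatorElement_eq_sq_mul_zpow hz hyx
  have hxw : Commute x w := ((Commute.refl x).pow_right 2).mul_right (hxz.zpow_right _)
  have hzw : Commute z w := (hxz.symm.pow_right 2).mul_right ((Commute.refl z).zpow_right _)
  have : (zpowers w).Normal := by
    refine normal_of_closure_eq_top hs fun g hg => mem_normalizer_zpowers_of_conj_eq ?_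
    rcases hg with rfl | rfl | rfl
    exacts [Or.inl hxw.mul_inv_cancel, Or.inr (conj_sq_mul_zpow_eq_inv hz hyx),
      Or.inl hzw.mul_inv_cancel]
  refine le_antisymm (commutator_le_of_closure_eq_top hs ?_) ?_
  · have of_commute {a b : G} (h : Commute a b) : ⁅a, b⁆ ∈ zpowers w := by
      rw [commutatorElement_eq_one_iff_commute.mpr h]
      exact one_mem _
    rintro a (rfl | rfl | rfl) b (rfl | rfl | rfl)
    exacts [of_commute (.refl _), hw ▸ mem_zpowers w, of_commute hxz,
      by rw [← commutatorElement_inv, hw]; exact inv_mem (mem_zpowers w), of_commute (.refl _),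
      of_commute hyz, of_commute hxz.symm, of_commute hyz.symm, of_commute (.refl _)]
  · rw [zpowers_le, ← hw]
    exact commutator_mem_commutator (mem_top x) (mem_top y)

end CentralDihedral

section Presentation

variable {n m : ℕ} {α β γ : ℤ}

theorem gX_pow : gX n m α β γ ^ n = gZ n m α β γ ^ α :=
  PresentedGroup.mk_eq_mk_of_mul_inv_mem (by simp [grels])

theorem gY_mul_gX :
    gY n m α β γ * gX n m α β γ = gX n m α β γ ^ (n - 1) * gY n m α β γ * gZ n m α β γ ^ γ :=
  PresentedGroup.mk_eq_mk_of_mul_inv_mem (by simp [grels])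

theorem commute_gY_gZ : Commute (gY n m α β γ) (gZ n m α β γ) :=
  PresentedGroup.mk_eq_mk_of_mul_inv_mem (by simp [grels])

theorem commute_gX_gZ : Commute (gX n m α β γ) (gZ n m α β γ) :=
  PresentedGroup.mk_eq_mk_of_mul_inv_mem (by simp [grels])

theorem closure_gX_gY_gZ :
    closure {gX n m α β γ, gY n m α β γ, gZ n m α β γ} = ⊤ := by
  rw [← PresentedGroup.closure_range_of]
  congr
  simp [Set.ext_iff, Fin.exists_fin_succ, gX, gY, gZ, eq_comm]

theorem gY_conj_gX (hn : n ≠ 0) :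
    gY n m α β γ * gX n m α β γ * (gY n m α β γ)⁻¹ =
      (gX n m α β γ)⁻¹ * gZ n m α β γ ^ (α + γ) :=
  calc gY n m α β γ * gX n m α β γ * (gY n m α β γ)⁻¹
      = gX n m α β γ ^ (n - 1) * (gY n m α β γ * gZ n m α β γ ^ γ * (gY n m α β γ)⁻¹) := by
        rw [gY_mul_gX]; group
    _ = gX n m α β γ ^ n * (gX n m α β γ)⁻¹ * gZ n m α β γ ^ γ := by
        rw [(commute_gY_gZ.zpow_right γ).eq, mul_inv_cancel_right, ← pow_sub_one_mul hn,
          mul_inv_cancel_right]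
    _ = (gX n m α β γ)⁻¹ * gZ n m α β γ ^ (α + γ) := by
        rw [gX_pow, ← (commute_gX_gZ.inv_left.zpow_right α).eq, mul_assoc, zpow_add]

end Presentation

theorem stmt4_general (n m : ℕ) (hn : 3 ≤ n) (α γ : ℤ) :
    commutator (GG n m α 0 γ) =
      Subgroup.zpowers ((gX n m α 0 γ) ^ 2 * (gZ n m α 0 γ) ^ (-α - γ)) := by
  rw [sub_eq_add_neg, ← neg_add]
  exact commutator_eq_zpowers_of_conj_eq_inv_mul closure_gX_gY_gZ commute_gX_gZ commute_gY_gZ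
    (gY_conj_gX (by omega))

/-- In `G(α, 0, γ)`, the commutator subgroup is the cyclic subgroup generated by
`X² Z^{-α-γ}`. -/
theorem stmt4 (n m : ℕ) (hn : 3 ≤ n) (hm : 1 ≤ m) (α γ : ℤ) :
    commutator (GG n m α 0 γ) =
      Subgroup.zpowers ((gX n m α 0 γ) ^ 2 * (gZ n m α 0 γ) ^ (-α - γ)) :=
  stmt4_general n m hn α γ
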